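/- arXiv:cs/0002008 — 4 statements merged into one kernel-verified Lean document; each statement's English description precedes it below -/
import Mathlib

section
/- Let f : S ⇒ T be a simulation between automata with boundary S, T : X → Y with initial states. If v is a deadlock state of S reachable from the initial state of S, then f(v) is a deadlock state of T reachable from the initial state of T. -/
/-- An automaton with boundary `S : X → Y`, where the action sets `X`, `Y`
have trivial (reflexive) actions `eX`, `eY`. -/
structure Aut (X Y : Type) (eX : X) (eY : Y) where
  State : Type
  Motion : Type
  src : Motion → State
  tgt : Motion → State
  refl : State → Motion
  refl_src : ∀ v, src (refl v) = v
  refl_tgt : ∀ v, tgt (refl v) = v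
  labL : Motion → X
  labR : Motion → Y
  labL_refl : ∀ v, labL (refl v) = eX
  labR_refl : ∀ v, labR (refl v) = eY

namespace Aut

variable {X Y Z W : Type} {eX : X} {eY : Y} {eZ : Z} {eW : W}

/-- The binding `S·T` of automata `S : X → Y` and `T : Y → Z`. -/
def bind (S : Aut X Y eX eY) (T : Aut Y Z eY eZ) : Aut X Z eX eZ where
  State := S.State × T.State
  Motion := {p : S.Motion × T.Motion // S.labR p.1 = T.labL p.2}
  src p := (S.src p.val.1, T.src p.val.2)
  tgt p := (S.tgt p.val.1, T.tgt p.val.2)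
  refl v := ⟨(S.refl v.1, T.refl v.2), by rw [S.labR_refl, T.labL_refl]⟩
  refl_src v := by simp [S.refl_src, T.refl_src]
  refl_tgt v := by simp [S.refl_tgt, T.refl_tgt]
  labL p := S.labL p.val.1
  labR p := T.labR p.val.2
  labL_refl v := S.labL_refl v.1
  labR_refl v := T.labR_refl v.2

/-- The product `S×T` of automata `S : X → Y` and `T : Z → W`. -/
def prod (S : Aut X Y eX eY) (T : Aut Z W eZ eW) :
    Aut (X × Z) (Y × W) (eX, eZ) (eY, eW) where
  State := S.State × T.State
  Motion := S.Motion × T.Motion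
  src p := (S.src p.1, T.src p.2)
  tgt p := (S.tgt p.1, T.tgt p.2)
  refl v := (S.refl v.1, T.refl v.2)
  refl_src v := by simp [S.refl_src, T.refl_src]
  refl_tgt v := by simp [S.refl_tgt, T.refl_tgt]
  labL p := (S.labL p.1, T.labL p.2)
  labR p := (S.labR p.1, T.labR p.2)
  labL_refl v := by simp [S.labL_refl, T.labL_refl]
  labR_refl v := by simp [S.labR_refl, T.labR_refl]

/-- The feedback `fb_Y S` of an automaton `S : X×Y → Y×Z`. -/
def fb (S : Aut (X × Y) (Y × Z) (eX, eY) (eY, eZ)) : Aut X Z eX eZ where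
  State := S.State
  Motion := {e : S.Motion // (S.labL e).2 = (S.labR e).1}
  src e := S.src e.val
  tgt e := S.tgt e.val
  refl v := ⟨S.refl v, by rw [S.labL_refl, S.labR_refl]⟩
  refl_src v := S.refl_src v
  refl_tgt v := S.refl_tgt v
  labL e := (S.labL e.val).1
  labR e := (S.labR e.val).2
  labL_refl v := by simp [S.labL_refl]
  labR_refl v := by simp [S.labR_refl]

/-- The identity automaton on an action set `X`. -/
def ident (X : Type) (eX : X) : Aut X X eX eX where
  State := PUnit
  Motion := X
  src _ := PUnit.unit
  tgt _ := PUnit.unit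
  refl _ := eX
  refl_src _ := rfl
  refl_tgt _ := rfl
  labL x := x
  labR x := x
  labL_refl _ := rfl
  labR_refl _ := rfl

end Aut

/-- `IsPath A v l w` : the list of motions `l` is a finite behaviour of `A`
from the state `v` ending at the state `w`. -/
def IsPath {X Y : Type} {eX : X} {eY : Y} (A : Aut X Y eX eY) :
    A.State → List A.Motion → A.State → Prop
  | v, [], w => v = w
  | v, e :: l, w => A.src e = v ∧ IsPath A (A.tgt e) l w

/-- `w` is reachable from `v`: there is a finite (possibly empty) behaviour from `v` to `w`. -/
def Reaches {X Y : Type} {eX : X} {eY : Y} (A : Aut X Y eX eY) (v w : A.State) : Prop :=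
  ∃ l, IsPath A v l w

/-- A state is a deadlock if the only motion out of it is the reflexive motion. -/
def Deadlock {X Y : Type} {eX : X} {eY : Y} (A : Aut X Y eX eY) (v : A.State) : Prop :=
  ∀ e, A.src e = v → e = A.refl v

/-- A behaviour (finite or infinite) of `A` from the state `v0`, encoded as a
finite-or-infinite sequence `Stream'.Seq` of motions. -/
def IsBehaviour {X Y : Type} {eX : X} {eY : Y} (A : Aut X Y eX eY) (v0 : A.State)
    (s : Stream'.Seq A.Motion) : Prop :=
  (∀ e, s.get? 0 = some e → A.src e = v0) ∧
  (∀ k e f, s.get? k = some e → s.get? (k + 1) = some f → A.src f = A.tgt e)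

/-- A comparison of automata: maps on states and motions preserving sources,
targets, reflexive motions and boundary labels. -/
structure Comparison {X Y : Type} {eX : X} {eY : Y} (S T : Aut X Y eX eY) where
  onState : S.State → T.State
  onMotion : S.Motion → T.Motion
  src_eq : ∀ e, T.src (onMotion e) = onState (S.src e)
  tgt_eq : ∀ e, T.tgt (onMotion e) = onState (S.tgt e)
  refl_eq : ∀ v, onMotion (S.refl v) = T.refl (onState v)
  labL_eq : ∀ e, T.labL (onMotion e) = S.labL e
  labR_eq : ∀ e, T.labR (onMotion e) = S.labR e

/-- An isomorphism of automata: bijections on states and motions preserving sources,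
targets, reflexive motions and boundary labels. -/
structure AutIso {X Y : Type} {eX : X} {eY : Y} (S T : Aut X Y eX eY) where
  stateEquiv : S.State ≃ T.State
  motionEquiv : S.Motion ≃ T.Motion
  src_eq : ∀ e, T.src (motionEquiv e) = stateEquiv (S.src e)
  tgt_eq : ∀ e, T.tgt (motionEquiv e) = stateEquiv (S.tgt e)
  refl_eq : ∀ v, motionEquiv (S.refl v) = T.refl (stateEquiv v)
  labL_eq : ∀ e, T.labL (motionEquiv e) = S.labL e
  labR_eq : ∀ e, T.labR (motionEquiv e) = S.labR e

/-- The reachable subautomaton `r(A)` of `A` with initial state `v0`. -/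
def reach {X Y : Type} {eX : X} {eY : Y} (A : Aut X Y eX eY) (v0 : A.State) :
    Aut X Y eX eY where
  State := {v : A.State // Reaches A v0 v}
  Motion := {e : A.Motion // Reaches A v0 (A.src e) ∧ Reaches A v0 (A.tgt e)}
  src e := ⟨A.src e.val, e.property.1⟩
  tgt e := ⟨A.tgt e.val, e.property.2⟩
  refl v := ⟨A.refl v.val, by rw [A.refl_src, A.refl_tgt]; exact ⟨v.property, v.property⟩⟩
  refl_src v := Subtype.ext (A.refl_src v.val)
  refl_tgt v := Subtype.ext (A.refl_tgt v.val)
  labL e := A.labL e.val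
  labR e := A.labR e.val
  labL_refl v := A.labL_refl v.val
  labR_refl v := A.labR_refl v.val

/-- The initial state of `A`, as a state of the reachable subautomaton `r(A)`. -/
def reachInit {X Y : Type} {eX : X} {eY : Y} (A : Aut X Y eX eY) (v0 : A.State) :
    (reach A v0).State :=
  ⟨v0, ⟨[], rfl⟩⟩

/-- A simulation `S ⇒ T` of automata with initial states: a comparison
`r(S) → r(T)` preserving the initial state and satisfying the lifting property. -/
structure Simulation {X Y : Type} {eX : X} {eY : Y} (S T : Aut X Y eX eY)
    (v0 : S.State) (w0 : T.State) where
  comp : Comparison (reach S v0) (reach T w0)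
  init : (comp.onState (reachInit S v0)).val = w0
  lift : ∀ (v : (reach S v0).State) (e : (reach T w0).Motion),
      (reach T w0).src e = comp.onState v →
      ∃ (l : List ((reach S v0).Motion)) (e' : (reach S v0).Motion)
        (v' : (reach S v0).State),
        IsPath (reach S v0) v (l ++ [e']) v' ∧
        (∀ m ∈ l, comp.onMotion m = (reach T w0).refl (comp.onState v)) ∧
        comp.onMotion e' = e

section Paths

variable {X Y : Type} {eX : X} {eY : Y} {A : Aut X Y eX eY}

theorem IsPath.append {u w x : A.State} {l l' : List A.Motion}
    (h : IsPath A u l w) (h' : IsPath A w l' x) : IsPath A u (l ++ l') x := by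
  induction l generalizing u with
  | nil => cases h; exact h'
  | cons e t ih => exact ⟨h.1, ih h.2⟩

theorem Reaches.tgt {v : A.State} {e : A.Motion} (h : Reaches A v (A.src e)) :
    Reaches A v (A.tgt e) :=
  let ⟨l, hl⟩ := h
  ⟨l ++ [e], hl.append ⟨rfl, rfl⟩⟩

/-- A reflexive motion returns to its source, so a behaviour from a deadlock never leaves it. -/
theorem Deadlock.eq_refl_of_mem_isPath {v w : A.State} (hv : Deadlock A v)
    {l : List A.Motion} (hl : IsPath A v l w) : ∀ m ∈ l, m = A.refl v := by
  induction l with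
  | nil => simp
  | cons e t ih =>
    have he : e = A.refl v := hv e hl.1
    have hrest : IsPath A v t w := by simpa only [he, A.refl_tgt] using hl.2
    exact List.forall_mem_cons.2 ⟨he, ih hrest⟩

theorem deadlock_reach_iff {v0 : A.State} {w : (reach A v0).State} :
    Deadlock (reach A v0) w ↔ Deadlock A w.val := by
  constructor
  · intro hw e he
    have hsrc : Reaches A v0 (A.src e) := he ▸ w.property
    exact congrArg Subtype.val (hw ⟨e, hsrc, hsrc.tgt⟩ (Subtype.ext he))
  · exact fun hw e he => Subtype.ext (hw e.val (congrArg Subtype.val he))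

end Paths

/-- The lift of a motion out of `f v` ends with a motion on a behaviour from the deadlock `v`,
hence reflexive, so the motion is the image of a reflexive motion. -/
theorem Simulation.deadlock_onState {X Y : Type} {eX : X} {eY : Y} {S T : Aut X Y eX eY}
    {v0 : S.State} {w0 : T.State} (f : Simulation S T v0 w0) {v : (reach S v0).State}
    (hv : Deadlock (reach S v0) v) : Deadlock (reach T w0) (f.comp.onState v) := by
  intro e he
  obtain ⟨l, e', v', hpath, -, rfl⟩ := f.lift v e he
  rw [hv.eq_refl_of_mem_isPath hpath e' (by simp), f.comp.refl_eq]

/-- A simulation `f : S ⇒ T` sends reachable deadlocks of `S` to reachable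
deadlocks of `T`. -/
theorem simulation_preserves_deadlock {X Y : Type} {eX : X} {eY : Y}
    (S T : Aut X Y eX eY) (v0 : S.State) (w0 : T.State)
    (f : Simulation S T v0 w0)
    (v : S.State) (hreach : Reaches S v0 v) (hdead : Deadlock S v) :
    Deadlock T (f.comp.onState ⟨v, hreach⟩).val ∧
    Reaches T w0 (f.comp.onState ⟨v, hreach⟩).val :=
  ⟨deadlock_reach_iff.1 (f.deadlock_onState (deadlock_reach_iff.2 hdead)),
    (f.comp.onState ⟨v, hreach⟩).property⟩
end

section
/- Given simulations f : R ⇒ S and g : S ⇒ T between automata with boundary R, S, T : X → Y with initial states, the composite of the state maps and the composite of the motion maps of f and g define a simulation g∘f : R ⇒ T. -/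
/-! A motion of `r(T)` out of `g (f v)` lifts along `g` to a path of `r(S)` whose motions `g`
sends to the reflexive motion at `g (f v)`, followed by one motion over the given one. Lifting
these motions one after the other along `f` gives a path of `r(R)` of the same shape for `g ∘ f`:
the prefix of each `f`-lift is sent by `f` to a reflexive motion, hence by `g` as well, at a state
that `g` still maps to `g (f v)`. -/

section

variable {X Y : Type} {eX : X} {eY : Y}

theorem isPath_append (A : Aut X Y eX eY) (l₁ l₂ : List A.Motion) (v w : A.State) :
    IsPath A v (l₁ ++ l₂) w ↔ ∃ u, IsPath A v l₁ u ∧ IsPath A u l₂ w := by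
  induction l₁ generalizing v with
  | nil => simp [IsPath]
  | cons e l ih => simp [IsPath, ih, and_assoc]

theorem isPath_append_singleton (A : Aut X Y eX eY) (l : List A.Motion) (e : A.Motion)
    (v w : A.State) : IsPath A v (l ++ [e]) w ↔ IsPath A v l (A.src e) ∧ A.tgt e = w := by
  simp [isPath_append, IsPath]

namespace Comparison

variable {R S T : Aut X Y eX eY}

def comp (g : Comparison S T) (f : Comparison R S) : Comparison R T where
  onState := g.onState ∘ f.onState
  onMotion := g.onMotion ∘ f.onMotion
  src_eq e := by simp only [Function.comp_apply, g.src_eq, f.src_eq]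
  tgt_eq e := by simp only [Function.comp_apply, g.tgt_eq, f.tgt_eq]
  refl_eq v := by simp only [Function.comp_apply, g.refl_eq, f.refl_eq]
  labL_eq e := by simp only [Function.comp_apply, g.labL_eq, f.labL_eq]
  labR_eq e := by simp only [Function.comp_apply, g.labR_eq, f.labR_eq]

theorem onState_src_of_onMotion_eq_refl (c : Comparison S T) {m : S.Motion} {t : T.State}
    (hm : c.onMotion m = T.refl t) : c.onState (S.src m) = t := by
  rw [← c.src_eq, hm, T.refl_src]

end Comparison

namespace Simulation

variable {R S T : Aut X Y eX eY} {u0 : R.State} {v0 : S.State} {w0 : T.State}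

theorem lift_silent_path {U : Aut X Y eX eY} (f : Simulation R S u0 v0)
    (c : Comparison (reach S v0) U) (t : U.State) (l : List (reach S v0).Motion)
    (hl : ∀ m ∈ l, c.onMotion m = U.refl t) (v : (reach R u0).State)
    (s : (reach S v0).State) (hpath : IsPath (reach S v0) (f.comp.onState v) l s) :
    ∃ (L : List (reach R u0).Motion) (v' : (reach R u0).State),
      IsPath (reach R u0) v L v' ∧
      (∀ m ∈ L, c.onMotion (f.comp.onMotion m) = U.refl t) ∧
      f.comp.onState v' = s := by
  induction l generalizing v with
  | nil => exact ⟨[], v, rfl, by simp, hpath⟩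
  | cons m l ih =>
    obtain ⟨hsrc, hrest⟩ := hpath
    have hm : c.onMotion m = U.refl t := hl m List.mem_cons_self
    have hct : c.onState (f.comp.onState v) = t := by
      rw [← hsrc]; exact c.onState_src_of_onMotion_eq_refl hm
    obtain ⟨l₁, e, v₁, hpath₁, hl₁, he⟩ := f.lift v m hsrc
    have hv₁ : f.comp.onState v₁ = (reach S v0).tgt m := by
      rw [← ((isPath_append_singleton _ _ _ _ _).1 hpath₁).2, ← f.comp.tgt_eq, he]
    obtain ⟨L₂, v', hL₂, hL₂silent, hv'⟩ :=
      ih (fun m' hm' => hl m' (List.mem_cons_of_mem m hm')) v₁ (hv₁ ▸ hrest)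
    refine ⟨l₁ ++ [e] ++ L₂, v', (isPath_append _ _ _ _ _).2 ⟨v₁, hpath₁, hL₂⟩, ?_, hv'⟩
    intro m' hm'
    rcases List.mem_append.1 hm' with hm' | hm'
    · rcases List.mem_append.1 hm' with hm' | hm'
      · rw [hl₁ m' hm', c.refl_eq, hct]
      · rw [List.mem_singleton.1 hm', he, hm]
    · exact hL₂silent m' hm'

theorem lift_trans (f : Simulation R S u0 v0) (g : Simulation S T v0 w0)
    (v : (reach R u0).State) (e : (reach T w0).Motion)
    (hsrc : (reach T w0).src e = (g.comp.comp f.comp).onState v) :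
    ∃ (l : List (reach R u0).Motion) (e' : (reach R u0).Motion) (v' : (reach R u0).State),
      IsPath (reach R u0) v (l ++ [e']) v' ∧
      (∀ m ∈ l, (g.comp.comp f.comp).onMotion m =
        (reach T w0).refl ((g.comp.comp f.comp).onState v)) ∧
      (g.comp.comp f.comp).onMotion e' = e := by
  obtain ⟨ls, es, _, hpaths, hls, hes⟩ := g.lift (f.comp.onState v) e hsrc
  obtain ⟨L, v', hL, hLsilent, hv'⟩ := f.lift_silent_path g.comp _ ls hls v _
    ((isPath_append_singleton _ _ _ _ _).1 hpaths).1
  obtain ⟨l₂, e', v'', hpath₂, hl₂, he'⟩ := f.lift v' es hv'.symm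
  have hgv' : g.comp.onState (f.comp.onState v') = g.comp.onState (f.comp.onState v) := by
    rw [hv', ← g.comp.src_eq, hes]; exact hsrc
  refine ⟨L ++ l₂, e', v'', ?_, ?_, ?_⟩
  · rw [List.append_assoc]
    exact (isPath_append _ _ _ _ _).2 ⟨v', hL, hpath₂⟩
  · intro m hm
    rcases List.mem_append.1 hm with hm | hm
    · exact hLsilent m hm
    · simp only [Comparison.comp, Function.comp_apply, hl₂ m hm, g.comp.refl_eq, hgv']
  · simp only [Comparison.comp, Function.comp_apply, he', hes]

def trans (f : Simulation R S u0 v0) (g : Simulation S T v0 w0) : Simulation R T u0 w0 where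
  comp := g.comp.comp f.comp
  init := by
    have hf : f.comp.onState (reachInit R u0) = reachInit S v0 := Subtype.ext f.init
    simpa only [Comparison.comp, Function.comp_apply, hf] using g.init
  lift := lift_trans f g

end Simulation

end

/-- The composites of the state maps and of the motion maps of two
simulations `f : R ⇒ S` and `g : S ⇒ T` define a simulation `g∘f : R ⇒ T`. -/
theorem simulation_comp {X Y : Type} {eX : X} {eY : Y}
    (R S T : Aut X Y eX eY) (u0 : R.State) (v0 : S.State) (w0 : T.State)
    (f : Simulation R S u0 v0) (g : Simulation S T v0 w0) :
    ∃ h : Simulation R T u0 w0,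
      (∀ v, h.comp.onState v = g.comp.onState (f.comp.onState v)) ∧
      (∀ e, h.comp.onMotion e = g.comp.onMotion (f.comp.onMotion e)) :=
  ⟨f.trans g, fun _ => rfl, fun _ => rfl⟩
end

section
/- Given simulations f : S ⇒ T between automata S, T : X → Y with initial states and g : U ⇒ V between automata U, V : Y → Z with initial states, the componentwise maps (v,w) ↦ (f(v), g(w)) on states and (e,e') ↦ (f(e), g(e')) on motions define a simulation f·g : S·U ⇒ T·V between the bindings (equipped with the pairs of initial states). -/
/-!
A simulation is a comparison of reachable parts with a lifting property. The componentwise map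
`r(S·U) → r(S)·r(U) → r(T)·r(V) → T·V` preserves the initial state, so it lands in `r(T·V)`.
To lift a motion `(a, b)` of `T·V`, lift `a` along `f` and `b` along `g`. The stuttering motions
of either lift are sent to reflexive motions, hence carry the trivial action on the shared
boundary `Y`; so `S` may stutter while `U` rests, then `U` stutter while `S` rests, and finally
both lifted motions fire together, their `Y`-labels agreeing because those of `a` and `b` do.
-/

variable {X Y Z X' Y' : Type} {eX : X} {eY : Y} {eZ : Z} {eX' : X'} {eY' : Y'}

namespace IsPath

variable {A : Aut X Y eX eY}

theorem append_s13 {u v w : A.State} {l₁ l₂ : List A.Motion} (h₁ : IsPath A u l₁ v)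
    (h₂ : IsPath A v l₂ w) : IsPath A u (l₁ ++ l₂) w := by
  induction l₁ generalizing u with
  | nil => obtain rfl : u = v := h₁; exact h₂
  | cons e l ih => exact ⟨h₁.1, ih h₁.2⟩

theorem of_append {u w : A.State} {l₁ l₂ : List A.Motion} (h : IsPath A u (l₁ ++ l₂) w) :
    ∃ v, IsPath A u l₁ v ∧ IsPath A v l₂ w := by
  induction l₁ generalizing u with
  | nil => exact ⟨u, rfl, h⟩
  | cons e l ih =>
    obtain ⟨v, h₁, h₂⟩ := ih h.2
    exact ⟨v, ⟨h.1, h₁⟩, h₂⟩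

theorem map {B : Aut X' Y' eX' eY'} (φ : A.State → B.State) (ψ : A.Motion → B.Motion)
    (hsrc : ∀ e, B.src (ψ e) = φ (A.src e)) (htgt : ∀ e, B.tgt (ψ e) = φ (A.tgt e))
    {v w : A.State} {l : List A.Motion} (h : IsPath A v l w) :
    IsPath B (φ v) (l.map ψ) (φ w) := by
  induction l generalizing v with
  | nil => obtain rfl : v = w := h; rfl
  | cons e l ih => exact ⟨(hsrc e).trans (congrArg φ h.1), htgt e ▸ ih h.2⟩

end IsPath

theorem Reaches.tail {A : Aut X Y eX eY} {u v : A.State} (h : Reaches A u v) {e : A.Motion}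
    (he : A.src e = v) : Reaches A u (A.tgt e) :=
  let ⟨l, hl⟩ := h
  ⟨l ++ [e], hl.append_s13 ⟨he, rfl⟩⟩

theorem IsPath.toReach {A : Aut X Y eX eY} {a₀ : A.State} (v : (reach A a₀).State)
    {w : A.State} {l : List A.Motion} (h : IsPath A v.val l w) :
    ∃ (hw : Reaches A a₀ w) (L : List (reach A a₀).Motion),
      IsPath (reach A a₀) v L ⟨w, hw⟩ ∧ L.map Subtype.val = l := by
  induction l generalizing v with
  | nil => obtain rfl : v.val = w := h; exact ⟨v.2, [], rfl, rfl⟩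
  | cons e l ih =>
    have hv : Reaches A a₀ v.val := v.2
    let e' : (reach A a₀).Motion := ⟨e, h.1 ▸ hv, hv.tail h.1⟩
    obtain ⟨hw, L, hL, rfl⟩ := ih ((reach A a₀).tgt e') h.2
    exact ⟨hw, e' :: L, ⟨Subtype.ext h.1, hL⟩, rfl⟩

theorem IsPath.reach_val {A : Aut X Y eX eY} {a₀ : A.State} {v w : (reach A a₀).State}
    {l : List (reach A a₀).Motion} (h : IsPath (reach A a₀) v l w) :
    IsPath A v.val (l.map Subtype.val) w.val :=
  h.map Subtype.val Subtype.val (fun _ => rfl) (fun _ => rfl)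

theorem reaches_reachInit {A : Aut X Y eX eY} {a₀ : A.State} (v : (reach A a₀).State) :
    Reaches (reach A a₀) (reachInit A a₀) v :=
  let ⟨_, hl⟩ := v.2
  let ⟨_, L, hL, _⟩ := IsPath.toReach (reachInit A a₀) hl
  ⟨L, hL⟩

theorem Reaches.map {A : Aut X Y eX eY} {B : Aut X' Y' eX' eY'} (φ : A.State → B.State)
    (ψ : A.Motion → B.Motion) (hsrc : ∀ e, B.src (ψ e) = φ (A.src e))
    (htgt : ∀ e, B.tgt (ψ e) = φ (A.tgt e)) {v w : A.State} (h : Reaches A v w) :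
    Reaches B (φ v) (φ w) :=
  let ⟨_, hl⟩ := h
  ⟨_, hl.map φ ψ hsrc htgt⟩

section Bind

variable {S : Aut X Y eX eY} {U : Aut Y Z eY eZ}

theorem Reaches.bind_fst {p q : (S.bind U).State} (h : Reaches (S.bind U) p q) :
    Reaches S p.1 q.1 :=
  h.map Prod.fst (fun m : (S.bind U).Motion => m.val.1) (fun _ => rfl) (fun _ => rfl)

theorem Reaches.bind_snd {p q : (S.bind U).State} (h : Reaches (S.bind U) p q) :
    Reaches U p.2 q.2 :=
  h.map Prod.snd (fun m : (S.bind U).Motion => m.val.2) (fun _ => rfl) (fun _ => rfl)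

theorem IsPath.bind_refl_right {v v' : S.State} {l : List S.Motion} (h : IsPath S v l v')
    (hl : ∀ m ∈ l, S.labR m = eY) (u : U.State) :
    ∃ L : List (S.bind U).Motion, IsPath (S.bind U) (v, u) L (v', u) ∧
      ∀ M ∈ L, M.val.1 ∈ l ∧ M.val.2 = U.refl u := by
  induction l generalizing v with
  | nil => obtain rfl : v = v' := h; exact ⟨[], rfl, by simp⟩
  | cons e l ih =>
    obtain ⟨L, hL, hmem⟩ := ih h.2 fun m hm => hl m (List.mem_cons_of_mem _ hm)
    let E : (S.bind U).Motion :=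
      ⟨(e, U.refl u), (hl e List.mem_cons_self).trans (U.labL_refl u).symm⟩
    have htgt : (S.bind U).tgt E = (S.tgt e, u) := Prod.ext rfl (U.refl_tgt u)
    refine ⟨E :: L, ⟨Prod.ext h.1 (U.refl_src u), htgt ▸ hL⟩, ?_⟩
    rintro M (_ | ⟨_, hM⟩)
    · exact ⟨List.mem_cons_self, rfl⟩
    · exact ⟨List.mem_cons_of_mem _ (hmem M hM).1, (hmem M hM).2⟩

theorem IsPath.bind_refl_left {u u' : U.State} {l : List U.Motion} (h : IsPath U u l u')
    (hl : ∀ m ∈ l, U.labL m = eY) (v : S.State) :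
    ∃ L : List (S.bind U).Motion, IsPath (S.bind U) (v, u) L (v, u') ∧
      ∀ M ∈ L, M.val.1 = S.refl v ∧ M.val.2 ∈ l := by
  induction l generalizing u with
  | nil => obtain rfl : u = u' := h; exact ⟨[], rfl, by simp⟩
  | cons e l ih =>
    obtain ⟨L, hL, hmem⟩ := ih h.2 fun m hm => hl m (List.mem_cons_of_mem _ hm)
    let E : (S.bind U).Motion :=
      ⟨(S.refl v, e), (S.labR_refl v).trans (hl e List.mem_cons_self).symm⟩
    have htgt : (S.bind U).tgt E = (v, U.tgt e) := Prod.ext (S.refl_tgt v) rfl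
    refine ⟨E :: L, ⟨Prod.ext (S.refl_src v) h.1, htgt ▸ hL⟩, ?_⟩
    rintro M (_ | ⟨_, hM⟩)
    · exact ⟨rfl, List.mem_cons_self⟩
    · exact ⟨(hmem M hM).1, List.mem_cons_of_mem _ (hmem M hM).2⟩

end Bind

namespace Comparison

variable {A B C : Aut X Y eX eY}

def trans (F : Comparison A B) (G : Comparison B C) : Comparison A C where
  onState := G.onState ∘ F.onState
  onMotion := G.onMotion ∘ F.onMotion
  src_eq e := (G.src_eq _).trans (congrArg G.onState (F.src_eq e))
  tgt_eq e := (G.tgt_eq _).trans (congrArg G.onState (F.tgt_eq e))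
  refl_eq v := (congrArg G.onMotion (F.refl_eq v)).trans (G.refl_eq _)
  labL_eq e := (G.labL_eq _).trans (F.labL_eq e)
  labR_eq e := (G.labR_eq _).trans (F.labR_eq e)

def bind {S T : Aut X Y eX eY} {U V : Aut Y Z eY eZ} (F : Comparison S T)
    (G : Comparison U V) : Comparison (S.bind U) (T.bind V) where
  onState p := (F.onState p.1, G.onState p.2)
  onMotion m := ⟨(F.onMotion m.val.1, G.onMotion m.val.2), by
    rw [F.labR_eq, G.labL_eq]; exact m.2⟩
  src_eq m := Prod.ext (F.src_eq _) (G.src_eq _)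
  tgt_eq m := Prod.ext (F.tgt_eq _) (G.tgt_eq _)
  refl_eq p := Subtype.ext (Prod.ext (F.refl_eq _) (G.refl_eq _))
  labL_eq m := F.labL_eq _
  labR_eq m := G.labR_eq _

def reachVal (A : Aut X Y eX eY) (a₀ : A.State) : Comparison (reach A a₀) A where
  onState := Subtype.val
  onMotion := Subtype.val
  src_eq _ := rfl
  tgt_eq _ := rfl
  refl_eq _ := rfl
  labL_eq _ := rfl
  labR_eq _ := rfl

def reachBind (S : Aut X Y eX eY) (U : Aut Y Z eY eZ) (v₀ : S.State) (u₀ : U.State) :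
    Comparison (reach (S.bind U) (v₀, u₀)) ((reach S v₀).bind (reach U u₀)) where
  onState q := (⟨q.val.1, q.2.bind_fst⟩, ⟨q.val.2, q.2.bind_snd⟩)
  onMotion m :=
    ⟨(⟨m.val.val.1, m.2.1.bind_fst, m.2.2.bind_fst⟩,
      ⟨m.val.val.2, m.2.1.bind_snd, m.2.2.bind_snd⟩), m.val.2⟩
  src_eq _ := rfl
  tgt_eq _ := rfl
  refl_eq _ := rfl
  labL_eq _ := rfl
  labR_eq _ := rfl

theorem reaches_onState {a₀ : A.State} {b₀ : B.State} (F : Comparison (reach A a₀) B)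
    (h : F.onState (reachInit A a₀) = b₀) (v : (reach A a₀).State) :
    Reaches B b₀ (F.onState v) :=
  h ▸ (reaches_reachInit v).map F.onState F.onMotion F.src_eq F.tgt_eq

def corestrictReach {a₀ : A.State} {b₀ : B.State} (F : Comparison (reach A a₀) B)
    (h : F.onState (reachInit A a₀) = b₀) : Comparison (reach A a₀) (reach B b₀) where
  onState v := ⟨F.onState v, F.reaches_onState h v⟩
  onMotion m := ⟨F.onMotion m, (F.src_eq m).symm ▸ F.reaches_onState h _,
    (F.tgt_eq m).symm ▸ F.reaches_onState h _⟩
  src_eq m := Subtype.ext (F.src_eq m)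
  tgt_eq m := Subtype.ext (F.tgt_eq m)
  refl_eq v := Subtype.ext (F.refl_eq v)
  labL_eq m := F.labL_eq m
  labR_eq m := F.labR_eq m

theorem labL_eq_of_onMotion_eq_refl (F : Comparison A B) {m : A.Motion} {c : B.State}
    (h : F.onMotion m = B.refl c) : A.labL m = eX := by
  rw [← F.labL_eq, h, B.labL_refl]

theorem labR_eq_of_onMotion_eq_refl (F : Comparison A B) {m : A.Motion} {c : B.State}
    (h : F.onMotion m = B.refl c) : A.labR m = eY := by
  rw [← F.labR_eq, h, B.labR_refl]

theorem onState_eq_of_isPath (F : Comparison A B) {c : B.State} {s s' : A.State}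
    {l : List A.Motion} (h : IsPath A s l s') (hl : ∀ m ∈ l, F.onMotion m = B.refl c)
    (hs : F.onState s = c) : F.onState s' = c := by
  induction l generalizing s with
  | nil => obtain rfl : s = s' := h; exact hs
  | cons m l ih =>
    refine ih h.2 (fun m' hm' => hl m' (List.mem_cons_of_mem _ hm')) ?_
    rw [← F.tgt_eq, hl m List.mem_cons_self, B.refl_tgt]

theorem onMotion_eq_refl_of_val_eq {a₀ : A.State} (F : Comparison (reach A a₀) B)
    {m : (reach A a₀).Motion} {v : (reach A a₀).State} (h : m.val = A.refl v.val) :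
    F.onMotion m = B.refl (F.onState v) :=
  (congrArg F.onMotion (Subtype.ext h)).trans (F.refl_eq v)

theorem labR_eq_of_val_mem {a₀ : A.State} (F : Comparison (reach A a₀) B)
    {l : List (reach A a₀).Motion} {c : B.State} (hl : ∀ m ∈ l, F.onMotion m = B.refl c) :
    ∀ m ∈ l.map Subtype.val, A.labR m = eY := by
  intro _ hm
  obtain ⟨m, hml, rfl⟩ := List.mem_map.1 hm
  exact F.labR_eq_of_onMotion_eq_refl (hl m hml)

theorem labL_eq_of_val_mem {a₀ : A.State} (F : Comparison (reach A a₀) B)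
    {l : List (reach A a₀).Motion} {c : B.State} (hl : ∀ m ∈ l, F.onMotion m = B.refl c) :
    ∀ m ∈ l.map Subtype.val, A.labL m = eX := by
  intro _ hm
  obtain ⟨m, hml, rfl⟩ := List.mem_map.1 hm
  exact F.labL_eq_of_onMotion_eq_refl (hl m hml)

end Comparison

namespace Simulation

variable {S T : Aut X Y eX eY} {U V : Aut Y Z eY eZ}
  {v₀ : S.State} {w₀ : T.State} {u₀ : U.State} {x₀ : V.State}

def bindComp (f : Simulation S T v₀ w₀) (g : Simulation U V u₀ x₀) :
    Comparison (reach (S.bind U) (v₀, u₀)) (reach (T.bind V) (w₀, x₀)) :=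
  (((Comparison.reachBind S U v₀ u₀).trans (f.comp.bind g.comp)).trans
    ((Comparison.reachVal T w₀).bind (Comparison.reachVal V x₀))).corestrictReach
    (Prod.ext f.init g.init)

theorem bindComp_onMotion_eq {f : Simulation S T v₀ w₀} {g : Simulation U V u₀ x₀}
    {M : (reach (S.bind U) (v₀, u₀)).Motion} {E : (reach (T.bind V) (w₀, x₀)).Motion}
    (h₁ : f.comp.onMotion ((Comparison.reachBind S U v₀ u₀).onMotion M).val.1 =
      ((Comparison.reachBind T V w₀ x₀).onMotion E).val.1)
    (h₂ : g.comp.onMotion ((Comparison.reachBind S U v₀ u₀).onMotion M).val.2 =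
      ((Comparison.reachBind T V w₀ x₀).onMotion E).val.2) :
    (bindComp f g).onMotion M = E :=
  Subtype.ext <| Subtype.ext <| Prod.ext (congrArg Subtype.val h₁) (congrArg Subtype.val h₂)

theorem exists_isPath_bindComp_eq_refl (f : Simulation S T v₀ w₀) (g : Simulation U V u₀ x₀)
    (q : (reach (S.bind U) (v₀, u₀)).State) {s₁ : (reach S v₀).State} {s₂ : (reach U u₀).State}
    {l₁ : List (reach S v₀).Motion} {l₂ : List (reach U u₀).Motion}
    (hs₁ : IsPath (reach S v₀) ((Comparison.reachBind S U v₀ u₀).onState q).1 l₁ s₁)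
    (hl₁ : ∀ m ∈ l₁, f.comp.onMotion m =
      (reach T w₀).refl (f.comp.onState ((Comparison.reachBind S U v₀ u₀).onState q).1))
    (hs₂ : IsPath (reach U u₀) ((Comparison.reachBind S U v₀ u₀).onState q).2 l₂ s₂)
    (hl₂ : ∀ m ∈ l₂, g.comp.onMotion m =
      (reach V x₀).refl (g.comp.onState ((Comparison.reachBind S U v₀ u₀).onState q).2)) :
    ∃ (hr : Reaches (S.bind U) (v₀, u₀) (s₁.val, s₂.val))
      (L : List (reach (S.bind U) (v₀, u₀)).Motion),
      IsPath (reach (S.bind U) (v₀, u₀)) q L ⟨(s₁.val, s₂.val), hr⟩ ∧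
      ∀ M ∈ L, (bindComp f g).onMotion M =
        (reach (T.bind V) (w₀, x₀)).refl ((bindComp f g).onState q) := by
  obtain ⟨L₁, hL₁, hmem₁⟩ := hs₁.reach_val.bind_refl_right (f.comp.labR_eq_of_val_mem hl₁) q.val.2
  obtain ⟨L₂, hL₂, hmem₂⟩ := hs₂.reach_val.bind_refl_left (g.comp.labL_eq_of_val_mem hl₂) s₁.val
  obtain ⟨hr, L, hL, hLval⟩ := IsPath.toReach q (hL₁.append_s13 hL₂)
  refine ⟨hr, L, hL, fun M hM => ?_⟩
  rcases List.mem_append.1 (hLval ▸ List.mem_map_of_mem hM : M.val ∈ L₁ ++ L₂) with hM | hM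
  · obtain ⟨hM₁, hM₂⟩ := hmem₁ _ hM
    exact bindComp_onMotion_eq (hl₁ _ ((List.mem_map_of_injective Subtype.val_injective).1 hM₁))
      (g.comp.onMotion_eq_refl_of_val_eq hM₂)
  · obtain ⟨hM₁, hM₂⟩ := hmem₂ _ hM
    refine bindComp_onMotion_eq ?_ (hl₂ _
      ((List.mem_map_of_injective Subtype.val_injective).1 hM₂))
    rw [f.comp.onMotion_eq_refl_of_val_eq hM₁, f.comp.onState_eq_of_isPath hs₁ hl₁ rfl]
    rfl

theorem bindComp_lift (f : Simulation S T v₀ w₀) (g : Simulation U V u₀ x₀)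
    (q : (reach (S.bind U) (v₀, u₀)).State) (E : (reach (T.bind V) (w₀, x₀)).Motion)
    (hE : (reach (T.bind V) (w₀, x₀)).src E = (bindComp f g).onState q) :
    ∃ (L : List (reach (S.bind U) (v₀, u₀)).Motion) (E' : (reach (S.bind U) (v₀, u₀)).Motion)
      (q' : (reach (S.bind U) (v₀, u₀)).State),
      IsPath (reach (S.bind U) (v₀, u₀)) q (L ++ [E']) q' ∧
      (∀ M ∈ L, (bindComp f g).onMotion M =
        (reach (T.bind V) (w₀, x₀)).refl ((bindComp f g).onState q)) ∧
      (bindComp f g).onMotion E' = E := by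
  let P := Comparison.reachBind S U v₀ u₀
  let Q := Comparison.reachBind T V w₀ x₀
  obtain ⟨l₁, e₁, _, hp₁, hl₁, he₁⟩ :=
    f.lift (P.onState q).1 (Q.onMotion E).val.1 (Subtype.ext (congrArg (·.val.1) hE))
  obtain ⟨l₂, e₂, _, hp₂, hl₂, he₂⟩ :=
    g.lift (P.onState q).2 (Q.onMotion E).val.2 (Subtype.ext (congrArg (·.val.2) hE))
  obtain ⟨s₁, hs₁, he₁s₁⟩ := hp₁.of_append
  obtain ⟨s₂, hs₂, he₂s₂⟩ := hp₂.of_append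
  obtain ⟨hr, L, hL, hLrefl⟩ := exists_isPath_bindComp_eq_refl f g q hs₁ hl₁ hs₂ hl₂
  have hlab : S.labR e₁.val = U.labL e₂.val := by
    have h₁ := f.comp.labR_eq e₁
    have h₂ := g.comp.labL_eq e₂
    rw [he₁] at h₁
    rw [he₂] at h₂
    exact h₁.symm.trans (E.val.2.trans h₂)
  let E₀ : (S.bind U).Motion := ⟨(e₁.val, e₂.val), hlab⟩
  have hsrc : (S.bind U).src E₀ = (s₁.val, s₂.val) :=
    Prod.ext (congrArg Subtype.val he₁s₁.1) (congrArg Subtype.val he₂s₂.1)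
  let E' : (reach (S.bind U) (v₀, u₀)).Motion := ⟨E₀, hsrc ▸ hr, hr.tail hsrc⟩
  exact ⟨L, E', _, hL.append_s13 ⟨Subtype.ext hsrc, rfl⟩, hLrefl, bindComp_onMotion_eq he₁ he₂⟩

def bind (f : Simulation S T v₀ w₀) (g : Simulation U V u₀ x₀) :
    Simulation (S.bind U) (T.bind V) (v₀, u₀) (w₀, x₀) where
  comp := bindComp f g
  init := Prod.ext f.init g.init
  lift := bindComp_lift f g

end Simulation

/-- The componentwise maps of simulations `f : S ⇒ T` and `g : U ⇒ V`
define a simulation `f·g : S·U ⇒ T·V` between the bindings, equipped with the pairs of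
initial states. -/
theorem simulation_bind {X Y Z : Type} {eX : X} {eY : Y} {eZ : Z}
    (S T : Aut X Y eX eY) (U V : Aut Y Z eY eZ)
    (v0 : S.State) (w0 : T.State) (u0 : U.State) (x0 : V.State)
    (f : Simulation S T v0 w0) (g : Simulation U V u0 x0) :
    ∃ h : Simulation (S.bind U) (T.bind V) (v0, u0) (w0, x0),
      (∀ (q : (reach (S.bind U) (v0, u0)).State)
        (h1 : Reaches S v0 q.val.1) (h2 : Reaches U u0 q.val.2),
        (h.comp.onState q).val =
          ((f.comp.onState ⟨q.val.1, h1⟩).val, (g.comp.onState ⟨q.val.2, h2⟩).val)) ∧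
      (∀ (m : (reach (S.bind U) (v0, u0)).Motion)
        (h1 : Reaches S v0 (S.src m.val.val.1) ∧ Reaches S v0 (S.tgt m.val.val.1))
        (h2 : Reaches U u0 (U.src m.val.val.2) ∧ Reaches U u0 (U.tgt m.val.val.2)),
        ((h.comp.onMotion m).val).val =
          ((f.comp.onMotion ⟨m.val.val.1, h1⟩).val, (g.comp.onMotion ⟨m.val.val.2, h2⟩).val)) :=
  ⟨f.bind g, fun _ _ _ => rfl, fun _ _ _ => rfl⟩
end

section
/- If S : X → Y and T : Y → Z are linear automata with boundary, then the binding S·T : X → Z is linearizable. -/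
/-- A motion of a two-boundary automaton is linear if it is labelled by the trivial
action on at least one of the two boundaries. -/
def LinearMotion {X Z : Type} {eX : X} {eZ : Z} (U : Aut X Z eX eZ) (e : U.Motion) : Prop :=
  U.labL e = eX ∨ U.labR e = eZ

/-- An automaton is linear if every motion is linear. -/
def LinearAut {X Z : Type} {eX : X} {eZ : Z} (U : Aut X Z eX eZ) : Prop :=
  ∀ e, LinearMotion U e

/-- A motion performs a nontrivial action on the boundary `b`
(`true` = left boundary, `false` = right boundary). -/
def NontrivOn {X Z : Type} {eX : X} {eZ : Z} (U : Aut X Z eX eZ) :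
    Bool → U.Motion → Prop
  | true, e => U.labL e ≠ eX
  | false, e => U.labR e ≠ eZ

/-- A two-boundary automaton is linearizable if every motion `e : v → w` can, for every
total order on its two boundaries, be refined into a finite behaviour from `v` to `w` of
linear motions respecting the order on boundaries and performing exactly the nontrivial
actions of `e` on each boundary. -/
def Linearizable {X Z : Type} {eX : X} {eZ : Z} (U : Aut X Z eX eZ) : Prop :=
  ∀ (e : U.Motion) (le : Bool → Bool → Prop), IsLinearOrder Bool le →
    ∃ l : List U.Motion, IsPath U (U.src e) l (U.tgt e) ∧
      (∀ m ∈ l, LinearMotion U m) ∧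
      (∀ (k k' : ℕ) (ek ek' : U.Motion) (b b' : Bool),
        l[k]? = some ek → l[k']? = some ek' →
        NontrivOn U b ek → NontrivOn U b' ek' → le b b' → k ≤ k') ∧
      (U.labL e ≠ eX → ∃ k ek, l[(k : ℕ)]? = some ek ∧ U.labL ek = U.labL e) ∧
      (U.labR e ≠ eZ → ∃ k ek, l[(k : ℕ)]? = some ek ∧ U.labR ek = U.labR e)

/-!
A motion `(e, f)` of `S·T` synchronises `e` and `f` on a common action `y` of `Y`. If `y` is
trivial, `(e, f)` factors, in either order, into `(e, idle)` and `(idle, f)`, which are idle on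
`Z` and on `X` respectively. Otherwise linearity of `S` forces `e` to be trivial on `X`, so
`(e, f)` is itself linear and is its own linearization.
-/

section Linearization

variable {X Z : Type} {eX : X} {eZ : Z} (U : Aut X Z eX eZ)

def RespectsOrder (le : Bool → Bool → Prop) (l : List U.Motion) : Prop :=
  ∀ (k k' : ℕ) (ek ek' : U.Motion) (b b' : Bool),
    l[k]? = some ek → l[k']? = some ek' →
    NontrivOn U b ek → NontrivOn U b' ek' → le b b' → k ≤ k'

def IsLinearization (le : Bool → Bool → Prop) (e : U.Motion) (l : List U.Motion) : Prop :=
  IsPath U (U.src e) l (U.tgt e) ∧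
    (∀ m ∈ l, LinearMotion U m) ∧
    RespectsOrder U le l ∧
    (U.labL e ≠ eX → ∃ k ek, l[(k : ℕ)]? = some ek ∧ U.labL ek = U.labL e) ∧
    (U.labR e ≠ eZ → ∃ k ek, l[(k : ℕ)]? = some ek ∧ U.labR ek = U.labR e)

variable {U}

theorem linearizable_of_isLinearization
    (h : ∀ e le, Std.Antisymm le → ∃ l, IsLinearization U le e l) : Linearizable U :=
  fun e le _ => h e le inferInstance

theorem respectsOrder_singleton (le : Bool → Bool → Prop) (m : U.Motion) :
    RespectsOrder U le [m] := by
  intro k k' _ _ _ _ hk hk' _ _ _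
  simp only [List.getElem?_singleton, Option.ite_none_right_eq_some] at hk hk'
  omega

theorem respectsOrder_pair {le : Bool → Bool → Prop} {m₁ m₂ : U.Motion}
    (h : ∀ b b', NontrivOn U b m₂ → NontrivOn U b' m₁ → ¬ le b b') :
    RespectsOrder U le [m₁, m₂] := by
  intro k k' ek ek' b b' hk hk' hb hb' hbb'
  by_contra hlt
  have hk₂ := (List.getElem?_eq_some_iff.1 hk).1
  obtain ⟨rfl, rfl⟩ : k = 1 ∧ k' = 0 := by
    simp only [List.length_cons, List.length_nil] at hk₂
    omega
  cases hk
  cases hk'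
  exact h b b' hb hb' hbb'

theorem isLinearization_singleton {e : U.Motion} (he : LinearMotion U e)
    (le : Bool → Bool → Prop) : IsLinearization U le e [e] :=
  ⟨⟨rfl, rfl⟩, by simpa using he, respectsOrder_singleton le e,
    fun _ => ⟨0, e, rfl, rfl⟩, fun _ => ⟨0, e, rfl, rfl⟩⟩

end Linearization

theorem not_le_false_true_or_not_le_true_false (le : Bool → Bool → Prop) [Std.Antisymm le] :
    ¬ le false true ∨ ¬ le true false := by
  by_contra! h
  exact Bool.false_ne_true (antisymm h.1 h.2)

namespace Aut

variable {X Y Z : Type} {eX : X} {eY : Y} {eZ : Z} {S : Aut X Y eX eY} {T : Aut Y Z eY eZ}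

def bindLeft (e : S.Motion) (w : T.State) (he : S.labR e = eY) : (S.bind T).Motion :=
  ⟨(e, T.refl w), by rw [T.labL_refl, he]⟩

def bindRight (v : S.State) (f : T.Motion) (hf : T.labL f = eY) : (S.bind T).Motion :=
  ⟨(S.refl v, f), by rw [S.labR_refl, hf]⟩

theorem not_nontrivOn_false_bindLeft (e : S.Motion) (w : T.State) (he : S.labR e = eY) :
    ¬ NontrivOn (S.bind T) false (bindLeft e w he) :=
  not_not_intro (T.labR_refl w)

theorem not_nontrivOn_true_bindRight (v : S.State) (f : T.Motion) (hf : T.labL f = eY) :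
    ¬ NontrivOn (S.bind T) true (bindRight v f hf) :=
  not_not_intro (S.labL_refl v)

theorem linearMotion_bindLeft (e : S.Motion) (w : T.State) (he : S.labR e = eY) :
    LinearMotion (S.bind T) (bindLeft e w he) :=
  Or.inr (T.labR_refl w)

theorem linearMotion_bindRight (v : S.State) (f : T.Motion) (hf : T.labL f = eY) :
    LinearMotion (S.bind T) (bindRight v f hf) :=
  Or.inl (S.labL_refl v)

variable {le : Bool → Bool → Prop} (p : (S.bind T).Motion)

theorem isLinearization_bindLeft_bindRight (hY : S.labR p.val.1 = eY) (hle : ¬ le false true) :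
    IsLinearization (S.bind T) le p
      [bindLeft p.val.1 (T.src p.val.2) hY, bindRight (S.tgt p.val.1) p.val.2 (p.prop ▸ hY)] := by
  refine ⟨?_, ?_, respectsOrder_pair ?_,
    fun _ => ⟨0, _, rfl, rfl⟩, fun _ => ⟨1, _, rfl, rfl⟩⟩
  · simp [IsPath, bind, bindLeft, bindRight, refl_src, refl_tgt]
  · simpa using ⟨linearMotion_bindLeft .., linearMotion_bindRight ..⟩
  · rintro (_ | _) (_ | _) hb hb'
    · exact (not_nontrivOn_false_bindLeft _ _ _ hb').elim
    · exact hle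
    · exact (not_nontrivOn_true_bindRight _ _ _ hb).elim
    · exact (not_nontrivOn_true_bindRight _ _ _ hb).elim

theorem isLinearization_bindRight_bindLeft (hY : S.labR p.val.1 = eY) (hle : ¬ le true false) :
    IsLinearization (S.bind T) le p
      [bindRight (S.src p.val.1) p.val.2 (p.prop ▸ hY), bindLeft p.val.1 (T.tgt p.val.2) hY] := by
  refine ⟨?_, ?_, respectsOrder_pair ?_,
    fun _ => ⟨1, _, rfl, rfl⟩, fun _ => ⟨0, _, rfl, rfl⟩⟩
  · simp [IsPath, bind, bindLeft, bindRight, refl_src, refl_tgt]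
  · simpa using ⟨linearMotion_bindRight .., linearMotion_bindLeft ..⟩
  · rintro (_ | _) (_ | _) hb hb'
    · exact (not_nontrivOn_false_bindLeft _ _ _ hb).elim
    · exact (not_nontrivOn_false_bindLeft _ _ _ hb).elim
    · exact hle
    · exact (not_nontrivOn_true_bindRight _ _ _ hb').elim

theorem linearMotion_bind_of_labR_ne (hS : LinearAut S) (hY : S.labR p.val.1 ≠ eY) :
    LinearMotion (S.bind T) p :=
  Or.inl ((hS p.val.1).resolve_right hY)

end Aut

theorem bind_linearizable_general {X Y Z : Type} {eX : X} {eY : Y} {eZ : Z}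
    (S : Aut X Y eX eY) (T : Aut Y Z eY eZ)
    (hS : LinearAut S) :
    Linearizable (S.bind T) := by
  refine linearizable_of_isLinearization fun p le _ => ?_
  by_cases hY : S.labR p.val.1 = eY
  · rcases not_le_false_true_or_not_le_true_false le with hle | hle
    · exact ⟨_, Aut.isLinearization_bindLeft_bindRight p hY hle⟩
    · exact ⟨_, Aut.isLinearization_bindRight_bindLeft p hY hle⟩
  · exact ⟨[p], isLinearization_singleton (Aut.linearMotion_bind_of_labR_ne p hS hY) le⟩

/-- The binding of linear automata is linearizable. -/
theorem bind_linearizable {X Y Z : Type} {eX : X} {eY : Y} {eZ : Z}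
    (S : Aut X Y eX eY) (T : Aut Y Z eY eZ)
    (hS : LinearAut S) (hT : LinearAut T) :
    Linearizable (S.bind T) :=
  bind_linearizable_general S T hS
end
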